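/- For the sandwiched Rényi relative entropy D_α(ρ‖σ) = (1/(α−1)) log(Tr[(σ^{(1−α)/(2α)} ρ σ^{(1−α)/(2α)})^α]/Tr ρ) with α ∈ (1,2) and positive definite σ, one has D_α(ρ‖σ) ≥ 0 whenever ρ is a density matrix and σ is a density matrix, with equality if ρ = σ. -/

import Mathlib

/-! Write `A = σ^r ρ σ^r` with `r = (1 - α)/(2α)`, let `aᵢ` be its eigenvalues and `vᵢ` its
eigenvectors. Since `σ^(-2r)` undoes the sandwich under the trace,
`1 = Tr ρ = Tr (A σ^(-2r)) = ∑ aᵢ bᵢ` with `bᵢ = ⟪vᵢ, σ^(-2r) vᵢ⟫`. The diagonal of a Hermitian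
matrix in any orthonormal basis is a doubly stochastic average of its eigenvalues, so
`∑ f (diagonal) ≤ ∑ f (eigenvalues)` for convex `f`; with `f = t ^ q`, `q = α/(α - 1)`, this gives
`∑ bᵢ ^ q ≤ Tr σ = 1`, and Hölder's inequality yields `Ψ_α = ∑ aᵢ ^ α ≥ 1`. For `ρ = σ` we have
`A = σ^(1/α)`, and the same convexity bound with `f = t ^ α` gives `Ψ_α ≤ Tr σ = 1`. -/

open Matrix ComplexOrder

variable {d : Type*} [Fintype d] [DecidableEq d]

/-- Real power of a Hermitian matrix, via its spectral decomposition. -/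
noncomputable def herPow {A : Matrix d d ℂ} (hA : A.IsHermitian) (r : ℝ) : Matrix d d ℂ :=
  (hA.eigenvectorUnitary : Matrix d d ℂ) *
    Matrix.diagonal (fun i => ((hA.eigenvalues i ^ r : ℝ) : ℂ)) *
    star (hA.eigenvectorUnitary : Matrix d d ℂ)

lemma herPow_isHermitian {A : Matrix d d ℂ} (hA : A.IsHermitian) (r : ℝ) :
    (herPow hA r).IsHermitian := by
  unfold herPow
  rw [Matrix.star_eq_conjTranspose]
  exact Matrix.isHermitian_mul_mul_conjTranspose _
    (Matrix.isHermitian_diagonal_iff.mpr fun i => by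
      simp [_root_.IsSelfAdjoint, Complex.conj_ofReal])

lemma sandwich_isHermitian {σ ρ : Matrix d d ℂ} (hσ : σ.IsHermitian) (hρ : ρ.IsHermitian)
    (r : ℝ) : (herPow hσ r * ρ * herPow hσ r).IsHermitian := by
  have hT := herPow_isHermitian hσ r
  unfold Matrix.IsHermitian at *
  rw [Matrix.conjTranspose_mul, Matrix.conjTranspose_mul, hT, hρ, Matrix.mul_assoc]

/-- `Ψ_α(ρ,σ) = Tr[(σ^{(1−α)/(2α)} ρ σ^{(1−α)/(2α)})^α]`, computed as the sum of the
`α`-th powers of the eigenvalues of the Hermitian matrix `σ^{(1−α)/(2α)} ρ σ^{(1−α)/(2α)}`. -/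
noncomputable def Psi (α : ℝ) (ρ σ : Matrix d d ℂ) (hρ : ρ.IsHermitian)
    (hσ : σ.IsHermitian) : ℝ :=
  ∑ i, (sandwich_isHermitian hσ hρ ((1 - α) / (2 * α))).eigenvalues i ^ α

/-- Sandwiched Rényi relative entropy
`D_α(ρ‖σ) = (1/(α−1)) log₂(Ψ_α(ρ,σ)/Tr ρ)`. -/
noncomputable def renyiDiv (α : ℝ) (ρ σ : Matrix d d ℂ) (hρ : ρ.IsHermitian)
    (hσ : σ.IsHermitian) : ℝ :=
  (α - 1)⁻¹ * Real.logb 2 (Psi α ρ σ hρ hσ / ρ.trace.re)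

lemma normSq_mem_doublyStochastic {U : Matrix d d ℂ} (hU : U ∈ unitaryGroup d ℂ) :
    Matrix.of (fun i j => Complex.normSq (U i j)) ∈ doublyStochastic ℝ d := by
  have hrow (i : d) : ∑ j, Complex.normSq (U i j) = 1 := by
    have h := congrFun (congrFun ((mem_unitaryGroup_iff).mp hU) i) i
    simp only [mul_apply, star_apply, RCLike.star_def, Complex.mul_conj, one_apply_eq] at h
    exact_mod_cast h
  have hcol (j : d) : ∑ i, Complex.normSq (U i j) = 1 := by
    have h := congrFun (congrFun ((mem_unitaryGroup_iff').mp hU) j) j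
    simp only [mul_apply, star_apply, RCLike.star_def, Complex.conj_mul', one_apply_eq] at h
    simp only [Complex.normSq_eq_norm_sq]
    exact_mod_cast h
  exact (mem_doublyStochastic_iff_sum).mpr
    ⟨fun _ _ => Complex.normSq_nonneg _, hrow, hcol⟩

lemma star_mul_conj_diagonal_mul_apply_self_re (U V : Matrix d d ℂ) (t : d → ℝ) (i : d) :
    ((star V * (U * diagonal (fun j => (t j : ℂ)) * star U) * V) i i).re
      = ∑ j, Complex.normSq ((star U * V) j i) * t j := by
  have hconj : star V * (U * diagonal (fun j => (t j : ℂ)) * star U) * V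
      = star (star U * V) * (diagonal (fun j => (t j : ℂ)) * (star U * V)) := by
    simp only [star_mul, star_star, Matrix.mul_assoc]
  rw [hconj, mul_apply, Complex.re_sum]
  refine Finset.sum_congr rfl fun j _ => ?_
  rw [star_apply, diagonal_mul, RCLike.star_def, mul_left_comm, mul_comm (starRingEnd ℂ _),
    Complex.mul_conj, ← Complex.ofReal_mul, Complex.ofReal_re, mul_comm]

theorem ConvexOn.sum_diag_unitaryConj_le {f : ℝ → ℝ} {s : Set ℝ} (hf : ConvexOn ℝ s f)
    {U V : Matrix d d ℂ} (hU : U ∈ unitaryGroup d ℂ) (hV : V ∈ unitaryGroup d ℂ)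
    {t : d → ℝ} (ht : ∀ j, t j ∈ s) :
    ∑ i, f ((star V * (U * diagonal (fun j => (t j : ℂ)) * star U) * V) i i).re
      ≤ ∑ j, f (t j) := by
  have hW := normSq_mem_doublyStochastic (mul_mem (Unitary.star_mem hU) hV)
  calc ∑ i, f ((star V * (U * diagonal (fun j => (t j : ℂ)) * star U) * V) i i).re
      = ∑ i, f (∑ j, Complex.normSq ((star U * V) j i) • t j) := by
        simp only [star_mul_conj_diagonal_mul_apply_self_re, smul_eq_mul]
    _ ≤ ∑ i, ∑ j, Complex.normSq ((star U * V) j i) • f (t j) :=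
        Finset.sum_le_sum fun i _ => hf.map_sum_le
          (fun j _ => nonneg_of_mem_doublyStochastic hW)
          (sum_col_of_mem_doublyStochastic hW i) (fun j _ => ht j)
    _ = ∑ j, f (t j) := by
        rw [Finset.sum_comm]
        simp only [← Finset.sum_smul]
        exact Finset.sum_congr rfl fun j _ => by
          rw [show ∑ i, Complex.normSq ((star U * V) j i) = 1 from
            sum_row_of_mem_doublyStochastic hW j, one_smul]

lemma Matrix.IsHermitian.eigenvalues_eq_re_diag {A : Matrix d d ℂ} (hA : A.IsHermitian)
    (i : d) : hA.eigenvalues i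
      = ((star (hA.eigenvectorUnitary : Matrix d d ℂ) * A * hA.eigenvectorUnitary) i i).re := by
  have h := congrFun (congrFun hA.conjStarAlgAut_star_eigenvectorUnitary i) i
  simp only [Unitary.conjStarAlgAut_apply, Unitary.coe_star, star_star] at h
  simp [h]

lemma Matrix.IsHermitian.trace_mul_eq_sum {A : Matrix d d ℂ} (hA : A.IsHermitian)
    (B : Matrix d d ℂ) :
    (A * B).trace = ∑ i, (hA.eigenvalues i : ℂ) *
      (star (hA.eigenvectorUnitary : Matrix d d ℂ) * B * hA.eigenvectorUnitary) i i := by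
  conv_lhs => rw [hA.spectral_theorem, Unitary.conjStarAlgAut_apply]
  rw [Matrix.mul_assoc, trace_mul_comm, ← Matrix.mul_assoc, trace_mul_comm]
  simp [trace, diagonal_mul]

lemma herPow_add {A : Matrix d d ℂ} (hA : A.PosDef) (x y : ℝ) :
    herPow hA.1 x * herPow hA.1 y = herPow hA.1 (x + y) := by
  simp only [herPow, Matrix.mul_assoc]
  rw [← Matrix.mul_assoc (star _) _ _, Unitary.coe_star_mul_self, Matrix.one_mul,
    ← Matrix.mul_assoc (diagonal _), diagonal_mul_diagonal]
  congr 3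
  funext i
  rw [← Complex.ofReal_mul, ← Real.rpow_add (hA.eigenvalues_pos i)]

lemma herPow_zero {A : Matrix d d ℂ} (hA : A.IsHermitian) : herPow hA 0 = 1 := by
  simp [herPow]

lemma herPow_one {A : Matrix d d ℂ} (hA : A.IsHermitian) : herPow hA 1 = A := by
  simp only [herPow, Real.rpow_one]
  exact hA.spectral_theorem.symm

lemma Matrix.PosSemidef.herPow_mul_mul_herPow {ρ σ : Matrix d d ℂ} (hρ : ρ.PosSemidef)
    (hσ : σ.IsHermitian) (r : ℝ) : (herPow hσ r * ρ * herPow hσ r).PosSemidef := by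
  simpa only [(herPow_isHermitian hσ r).eq] using hρ.mul_mul_conjTranspose_same (herPow hσ r)

lemma trace_herPow_mul_mul_herPow_mul_herPow {σ : Matrix d d ℂ} (hσ : σ.PosDef)
    (ρ : Matrix d d ℂ) (r : ℝ) :
    (herPow hσ.1 r * ρ * herPow hσ.1 r * herPow hσ.1 (-(2 * r))).trace = ρ.trace := by
  rw [Matrix.mul_assoc, trace_mul_comm, ← Matrix.mul_assoc, herPow_add hσ, herPow_add hσ,
    show r + -(2 * r) + r = 0 by ring, herPow_zero, Matrix.one_mul]

lemma sum_rpow_diag_unitaryConj_herPow_le {σ : Matrix d d ℂ} (hσ : σ.PosSemidef)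
    {V : Matrix d d ℂ} (hV : V ∈ unitaryGroup d ℂ) {t p : ℝ} (htp : t * p = 1) (hp : 1 ≤ p) :
    ∑ i, ((star V * herPow hσ.1 t * V) i i).re ^ p ≤ σ.trace.re := by
  have hsum := (convexOn_rpow hp).sum_diag_unitaryConj_le hσ.1.eigenvectorUnitary.2 hV
    (t := fun j => hσ.1.eigenvalues j ^ t) fun j => Real.rpow_nonneg (hσ.eigenvalues_nonneg j) t
  simp only [← Real.rpow_mul (hσ.eigenvalues_nonneg _), htp, Real.rpow_one] at hsum
  rwa [hσ.1.trace_eq_sum_eigenvalues, Complex.re_sum]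

lemma one_le_sum_rpow_of_sum_mul_eq_one {ι : Type*} [Fintype ι] {p q : ℝ}
    (hpq : p.HolderConjugate q) {a b : ι → ℝ} (ha : ∀ i, 0 ≤ a i) (hb : ∀ i, 0 ≤ b i)
    (hab : ∑ i, a i * b i = 1) (hbq : ∑ i, b i ^ q ≤ 1) : 1 ≤ ∑ i, a i ^ p := by
  have hap : 0 ≤ ∑ i, a i ^ p := Finset.sum_nonneg fun i _ => Real.rpow_nonneg (ha i) p
  have hbq' : (∑ i, b i ^ q) ^ (1 / q) ≤ 1 :=
    Real.rpow_le_one (Finset.sum_nonneg fun i _ => Real.rpow_nonneg (hb i) q) hbq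
      (one_div_nonneg.mpr hpq.symm.nonneg)
  have hnorm : 1 ≤ (∑ i, a i ^ p) ^ (1 / p) := calc
    1 = ∑ i, a i * b i := hab.symm
    _ ≤ (∑ i, a i ^ p) ^ (1 / p) * (∑ i, b i ^ q) ^ (1 / q) :=
      Real.inner_le_Lp_mul_Lq_of_nonneg Finset.univ hpq (fun i _ => ha i) (fun i _ => hb i)
    _ ≤ (∑ i, a i ^ p) ^ (1 / p) := mul_le_of_le_one_right (Real.rpow_nonneg hap _) hbq'
  by_contra! hlt
  exact (Real.rpow_lt_one hap hlt (one_div_pos.mpr hpq.pos)).not_ge hnorm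

theorem one_le_Psi {α : ℝ} (hα : 1 < α) {ρ σ : Matrix d d ℂ} (hρ : ρ.PosSemidef)
    (hσ : σ.PosDef) (hρ1 : ρ.trace = 1) (hσ1 : σ.trace = 1) :
    1 ≤ Psi α ρ σ hρ.1 hσ.1 := by
  set r := (1 - α) / (2 * α)
  have hA := sandwich_isHermitian hσ.1 hρ.1 r
  set V : Matrix d d ℂ := (hA.eigenvectorUnitary : Matrix d d ℂ)
  set b : d → ℝ := fun i => ((star V * herPow hσ.1 (-(2 * r)) * V) i i).re
  have hab : ∑ i, hA.eigenvalues i * b i = 1 := by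
    have h := hA.trace_mul_eq_sum (herPow hσ.1 (-(2 * r)))
    rw [trace_herPow_mul_mul_herPow_mul_herPow hσ, hρ1] at h
    simpa [b, Complex.re_sum] using (congrArg Complex.re h).symm
  have hb (i : d) : 0 ≤ b i := by
    simp only [b, herPow, star_mul_conj_diagonal_mul_apply_self_re]
    exact Finset.sum_nonneg fun j _ =>
      mul_nonneg (Complex.normSq_nonneg _) (Real.rpow_nonneg (hσ.eigenvalues_pos j).le _)
  have hbq : ∑ i, b i ^ α.conjExponent ≤ 1 := by
    have htq : -(2 * r) * α.conjExponent = 1 := by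
      have hα0 : α - 1 ≠ 0 := (sub_pos.2 hα).ne'
      simp only [r, Real.conjExponent]
      field_simp
      ring
    simpa [hσ1] using sum_rpow_diag_unitaryConj_herPow_le hσ.posSemidef
      hA.eigenvectorUnitary.2 htq (Real.HolderConjugate.conjExponent hα).symm.lt.le
  exact one_le_sum_rpow_of_sum_mul_eq_one (.conjExponent hα)
    (hρ.herPow_mul_mul_herPow hσ.1 r).eigenvalues_nonneg hb hab hbq

theorem Psi_self_le_trace {α : ℝ} (hα : 1 ≤ α) {σ : Matrix d d ℂ} (hσ : σ.PosDef) :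
    Psi α σ σ hσ.1 hσ.1 ≤ σ.trace.re := by
  set r := (1 - α) / (2 * α)
  have hA := sandwich_isHermitian hσ.1 hσ.1 r
  set V : Matrix d d ℂ := (hA.eigenvectorUnitary : Matrix d d ℂ)
  have hself : herPow hσ.1 r * σ * herPow hσ.1 r = herPow hσ.1 α⁻¹ := by
    have hα0 : α ≠ 0 := (zero_lt_one.trans_le hα).ne'
    calc herPow hσ.1 r * σ * herPow hσ.1 r
        = herPow hσ.1 r * herPow hσ.1 1 * herPow hσ.1 r := by rw [herPow_one]
      _ = herPow hσ.1 (r + 1 + r) := by rw [herPow_add hσ, herPow_add hσ]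
      _ = herPow hσ.1 α⁻¹ := by
          congr 1
          simp only [r]
          field_simp
          ring
  have hdiag (i : d) : hA.eigenvalues i = ((star V * herPow hσ.1 α⁻¹ * V) i i).re := by
    rw [← hself]
    exact hA.eigenvalues_eq_re_diag i
  unfold Psi
  simp only [hdiag]
  exact sum_rpow_diag_unitaryConj_herPow_le hσ.posSemidef hA.eigenvectorUnitary.2
    (inv_mul_cancel₀ (zero_lt_one.trans_le hα).ne') hα

/-- For `α ∈ (1,2)`, density matrices `ρ`, `σ` with `σ` positive definite,
`D_α(ρ‖σ) ≥ 0`, with equality if `ρ = σ`. -/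
theorem renyiDiv_nonneg (α : ℝ) (hα : α ∈ Set.Ioo (1 : ℝ) 2)
    (ρ σ : Matrix d d ℂ) (hρ : ρ.PosSemidef) (hσ : σ.PosDef)
    (hρ1 : ρ.trace = 1) (hσ1 : σ.trace = 1) :
    0 ≤ renyiDiv α ρ σ hρ.1 hσ.1 ∧ (ρ = σ → renyiDiv α ρ σ hρ.1 hσ.1 = 0) := by
  have hPsi := one_le_Psi hα.1 hρ hσ hρ1 hσ1
  refine ⟨?_, fun hρσ => ?_⟩
  · rw [renyiDiv, hρ1, Complex.one_re, div_one]
    exact mul_nonneg (inv_nonneg.2 (sub_nonneg.2 hα.1.le)) (Real.logb_nonneg one_lt_two hPsi)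
  · subst hρσ
    have hPsi_eq : Psi α ρ ρ hρ.1 hσ.1 = 1 := le_antisymm
      ((Psi_self_le_trace hα.1.le hσ).trans_eq (by rw [hρ1, Complex.one_re])) hPsi
    rw [renyiDiv, hPsi_eq, hρ1, Complex.one_re, div_one, Real.logb_one, mul_zero]
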